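/- arXiv:2401.09842 — 5 statements merged into one kernel-verified Lean document; each statement's English description precedes it below -/
import Mathlib

section
/- For every real number s > 1, there exists an odd positive integer a such that the difference σ_s(an+2) − σ_s((a+1)n+1) changes sign infinitely often; that is, both the set {n ∈ ℕ : σ_s(an+2) < σ_s((a+1)n+1)} and the set {n ∈ ℕ : σ_s(an+2) > σ_s((a+1)n+1)} are infinite. (In particular, the answer to Pongsriiam's Problem 3.7 is negative: sign changes of σ_s(an+b) − σ_s(cn+d) occurring infinitely often does not force a = c.) -/
open Finset

/-- The generalized sum-of-divisors function `σ_s(n) = ∑_{d ∣ n} d^s` for a real exponent `s`. -/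
noncomputable def sigmaR (s : ℝ) (n : ℕ) : ℝ := ∑ d ∈ n.divisors, (d : ℝ) ^ s

/-! Take `a` odd and so large that `(1 + 1/a)^s < 1 + 2^{-s}`. If `p = an + 2` is prime with
`n ≥ 2`, then `σ_s(p) = 1 + p^s < 1 + q^s ≤ σ_s(q)` for `q = (a+1)n + 1 > p`. If
`p = (a+1)n + 1` is prime with `n = 2m`, then `an + 2 = 2k` is even, so
`1 + (2k)^s + k^s ≤ σ_s(2k)`, while `p^s ≤ (1 + 1/a)^s (2k)^s < (2k)^s + k^s`. Dirichlet's
theorem supplies infinitely many primes of both shapes. -/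

namespace Nat

theorem infinite_setOf_prime_mul_add {q r : ℕ} (hq : q ≠ 0) (hr : r.Coprime q) :
    {n : ℕ | (q * n + r).Prime}.Infinite := by
  refine Set.infinite_of_forall_exists_gt fun M => ?_
  obtain ⟨p, hpM, hp, hpr⟩ := forall_exists_prime_gt_and_modEq (q * M + r) hq hr
  obtain ⟨n, hn⟩ := (modEq_iff_dvd' (by omega)).mp hpr.symm
  have hpn : q * n + r = p := by omega
  refine ⟨n, by rwa [Set.mem_ofPred_eq, hpn], ?_⟩
  exact Nat.lt_of_mul_lt_mul_left (a := q) (by omega)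

end Nat

section SigmaR

variable {s : ℝ}

theorem sum_rpow_le_sigmaR {m : ℕ} {t : Finset ℕ} (ht : t ⊆ m.divisors) :
    ∑ d ∈ t, (d : ℝ) ^ s ≤ sigmaR s m :=
  sum_le_sum_of_subset_of_nonneg ht fun d _ _ => by positivity

theorem sigmaR_prime {p : ℕ} (hp : p.Prime) : sigmaR s p = 1 + (p : ℝ) ^ s := by
  rw [sigmaR, hp.divisors, sum_pair hp.one_lt.ne]
  simp

theorem one_add_rpow_le_sigmaR {m : ℕ} (hm : 1 < m) : 1 + (m : ℝ) ^ s ≤ sigmaR s m := by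
  have hm0 : m ≠ 0 := by omega
  have hsub : ({1, m} : Finset ℕ) ⊆ m.divisors :=
    insert_subset (Nat.one_mem_divisors.mpr hm0) <|
      singleton_subset_iff.mpr (Nat.mem_divisors_self m hm0)
  simpa [sum_pair hm.ne] using sum_rpow_le_sigmaR (s := s) hsub

theorem one_add_rpow_add_rpow_le_sigmaR_two_mul {k : ℕ} (hk : 2 ≤ k) :
    1 + ((2 * k : ℕ) : ℝ) ^ s + (k : ℝ) ^ s ≤ sigmaR s (2 * k) := by
  have hk0 : 2 * k ≠ 0 := by omega
  have hsub : ({1, 2 * k, k} : Finset ℕ) ⊆ (2 * k).divisors :=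
    insert_subset (Nat.one_mem_divisors.mpr hk0) <| insert_subset (Nat.mem_divisors_self _ hk0) <|
      singleton_subset_iff.mpr (Nat.mem_divisors.mpr ⟨dvd_mul_left k 2, hk0⟩)
  have h := sum_rpow_le_sigmaR (s := s) hsub
  rwa [sum_insert (by simp only [mem_insert, mem_singleton]; omega), sum_pair (by omega),
    Nat.cast_one, Real.one_rpow, ← add_assoc] at h

theorem sigmaR_prime_lt_sigmaR (hs : 0 < s) {p m : ℕ} (hp : p.Prime) (hpm : p < m) :
    sigmaR s p < sigmaR s m := by
  have hlt : (p : ℝ) ^ s < (m : ℝ) ^ s :=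
    Real.rpow_lt_rpow (Nat.cast_nonneg p) (by exact_mod_cast hpm) hs
  rw [sigmaR_prime hp]
  linarith [one_add_rpow_le_sigmaR (s := s) (hp.one_lt.trans hpm)]

end SigmaR

theorem rpow_lt_rpow_two_mul_add_rpow {s c y k : ℝ} (hs : 0 ≤ s) (hy : 0 ≤ y) (hk : 0 < k)
    (hc : c ^ s < 1 + 2 ^ (-s)) (hyc : y ≤ c * (2 * k)) :
    y ^ s < (2 * k) ^ s + k ^ s := by
  have hc0 : 0 ≤ c := nonneg_of_mul_nonneg_left (hy.trans hyc) (by positivity)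
  have h2k : (2 : ℝ) ^ (-s) * (2 * k) ^ s = k ^ s := by
    rw [Real.mul_rpow zero_le_two hk.le, ← mul_assoc, ← Real.rpow_add two_pos]
    simp
  calc y ^ s ≤ (c * (2 * k)) ^ s := Real.rpow_le_rpow hy hyc hs
    _ = c ^ s * (2 * k) ^ s := Real.mul_rpow hc0 (by positivity)
    _ < (1 + 2 ^ (-s)) * (2 * k) ^ s := by gcongr
    _ = (2 * k) ^ s + k ^ s := by rw [add_mul, one_mul, h2k]

theorem exists_odd_one_add_inv_rpow_lt (s : ℝ) {ε : ℝ} (hε : 0 < ε) :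
    ∃ a : ℕ, Odd a ∧ (1 + 1 / (a : ℝ)) ^ s < 1 + ε := by
  have hlim : Filter.Tendsto (fun a : ℕ => (1 + 1 / (a : ℝ)) ^ s) Filter.atTop (nhds 1) := by
    have h := (tendsto_const_nhds (x := (1 : ℝ))).add tendsto_one_div_atTop_nhds_zero_nat
    simpa using h.rpow_const (p := s) (Or.inl (by norm_num))
  obtain ⟨N, hN⟩ :=
    Filter.eventually_atTop.mp (hlim.eventually_lt_const (lt_add_of_pos_right 1 hε))
  exact ⟨2 * N + 1, odd_two_mul_add_one N, by exact_mod_cast hN (2 * N + 1) (by omega)⟩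

theorem sigmaR_mul_add_one_lt_of_prime {s : ℝ} (hs : 0 ≤ s) {a m : ℕ} (ha : 0 < a)
    (hm : 0 < m) (hc : (1 + 1 / (a : ℝ)) ^ s < 1 + 2 ^ (-s)) (hp : (2 * (a + 1) * m + 1).Prime) :
    sigmaR s ((a + 1) * (2 * m) + 1) < sigmaR s (a * (2 * m) + 2) := by
  have hpk : ((2 * (a + 1) * m + 1 : ℕ) : ℝ) ≤
      (1 + 1 / (a : ℝ)) * (2 * ((a * m + 1 : ℕ) : ℝ)) := by
    have ha' : (0 : ℝ) < a := by exact_mod_cast ha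
    push_cast
    rw [one_add_div ha'.ne', div_mul_eq_mul_div, le_div_iff₀ ha']
    nlinarith
  have hpow := rpow_lt_rpow_two_mul_add_rpow hs (Nat.cast_nonneg _) (by positivity) hc hpk
  rw [show (a + 1) * (2 * m) + 1 = 2 * (a + 1) * m + 1 by ring,
    show a * (2 * m) + 2 = 2 * (a * m + 1) by ring, sigmaR_prime hp]
  refine lt_of_lt_of_le ?_ (one_add_rpow_add_rpow_le_sigmaR_two_mul (by nlinarith))
  push_cast at hpow ⊢
  linarith

/-- For every real `s > 1` there is an odd positive integer `a` such that
`σ_s(an+2) - σ_s((a+1)n+1)` changes sign infinitely often. -/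
theorem stmt_0 (s : ℝ) (hs : 1 < s) :
    ∃ a : ℕ, Odd a ∧ 0 < a ∧
      {n : ℕ | 0 < n ∧ sigmaR s (a * n + 2) < sigmaR s ((a + 1) * n + 1)}.Infinite ∧
      {n : ℕ | 0 < n ∧ sigmaR s ((a + 1) * n + 1) < sigmaR s (a * n + 2)}.Infinite := by
  obtain ⟨a, ha, hc⟩ := exists_odd_one_add_inv_rpow_lt s (Real.rpow_pos_of_pos two_pos (-s))
  refine ⟨a, ha, ha.pos, ?_, ?_⟩
  · have hprimes := (Nat.infinite_setOf_prime_mul_add ha.pos.ne'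
      (Nat.coprime_two_left.mpr ha)).sdiff (Set.finite_Iio 2)
    refine hprimes.mono ?_
    rintro n ⟨hp, hn⟩
    simp only [Set.mem_Iio, not_lt] at hn
    exact ⟨by omega, sigmaR_prime_lt_sigmaR (by linarith) hp (by nlinarith)⟩
  · have hprimes := (Nat.infinite_setOf_prime_mul_add (q := 2 * (a + 1)) (by omega)
      (Nat.coprime_one_left _)).sdiff (Set.finite_singleton 0)
    refine (hprimes.image (f := (2 * ·)) fun _ _ _ _ h => by simpa using h).mono ?_
    rintro _ ⟨m, ⟨hp, hm0⟩, rfl⟩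
    have hm : 0 < m := Nat.pos_of_ne_zero hm0
    exact ⟨Nat.mul_pos two_pos hm, sigmaR_mul_add_one_lt_of_prime (by linarith) ha.pos hm hc hp⟩
end

section
/- There exists a positive integer K₀ such that for every integer K ≥ K₀, ∑_{n=1}^{K} σ(30n) > ∑_{n=1}^{K} σ(30n+1). -/
/-!
Since `σ(30n) ≥ σ(30) n = 72 n`, the right-hand sum is at least `36 K²`. On the other side
`σ(m) = ∑_{d ∣ m} m / d`; for `m = 30n + 1 ≤ M := 30K + 1` only divisors `d ≤ M` coprime to `30`
occur, and each divides `30n + 1` for at most `K / d + 1` values `n ≤ K`, these `n` being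
congruent modulo `d`. Hence
`∑ σ(30n + 1) ≤ M (K ∑_{(d, 30) = 1} d⁻² + ∑_{d ≤ M} d⁻¹) ≤ (9/8) 30 K² + O(K^{3/2})`,
the constant coming from the eight units below `30` and the tail `∑_{d > 30} d⁻² < 2/31`;
and `(9/8) 30 < 36`.
-/

open Finset

def sigma1 (n : ℕ) : ℕ := ∑ d ∈ n.divisors, d

lemma sigma1_mul_le_sigma1_mul (a n : ℕ) : sigma1 a * n ≤ sigma1 (a * n) := by
  rcases Nat.eq_zero_or_pos n with rfl | hn
  · simp
  calc sigma1 a * n = ∑ x ∈ a.divisors.image (· * n), x := by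
        rw [sigma1, sum_mul, sum_image fun _ _ _ _ h => Nat.eq_of_mul_eq_mul_right hn h]
    _ ≤ sigma1 (a * n) := sum_le_sum_of_subset fun x hx => by
        obtain ⟨d, hd, rfl⟩ := mem_image.mp hx
        obtain ⟨hda, ha⟩ := Nat.mem_divisors.mp hd
        exact Nat.mem_divisors.mpr ⟨mul_dvd_mul_right hda n, mul_ne_zero ha hn.ne'⟩

lemma sum_Icc_one_natCast (K : ℕ) : ∑ n ∈ Icc 1 K, (n : ℝ) = K * (K + 1) / 2 := by
  induction K with
  | zero => simp
  | succ K ih =>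
    rw [sum_Icc_succ_top (by omega), ih]
    push_cast
    ring

lemma sigma1_mul_le_sum_sigma1_mul (a K : ℕ) :
    sigma1 a * (K * (K + 1) / 2 : ℝ) ≤ ∑ n ∈ Icc 1 K, (sigma1 (a * n) : ℝ) := by
  rw [← sum_Icc_one_natCast, mul_sum]
  gcongr with n
  exact_mod_cast sigma1_mul_le_sigma1_mul a n

lemma card_le_div_add_one_of_modEq {S : Finset ℕ} {d K : ℕ}
    (hmod : ∀ a ∈ S, ∀ b ∈ S, a ≡ b [MOD d]) (hle : ∀ a ∈ S, a ≤ K) : #S ≤ K / d + 1 := by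
  simpa using card_le_card_of_injOn (· / d) (t := range (K / d + 1))
    (fun a ha => mem_range.mpr (Nat.lt_succ_of_le (Nat.div_le_div_right (hle a ha))))
    (fun a ha b hb hab => by
      rw [← Nat.div_add_mod a d, ← Nat.div_add_mod b d, (hmod a ha b hb : a % d = b % d)]
      simp only at hab
      rw [hab])

lemma card_filter_dvd_mul_add_one_le {q d : ℕ} (hd : d.Coprime q) (K : ℕ) :
    #{n ∈ Icc 1 K | d ∣ q * n + 1} ≤ K / d + 1 := by
  refine card_le_div_add_one_of_modEq (fun a ha b hb => ?_)
    (fun a ha => (mem_Icc.mp (mem_filter.mp ha).1).2)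
  have ha' := Nat.modEq_zero_iff_dvd.mpr (mem_filter.mp ha).2
  have hb' := Nat.modEq_zero_iff_dvd.mpr (mem_filter.mp hb).2
  exact Nat.ModEq.cancel_left_of_coprime hd (Nat.ModEq.add_right_cancel' 1 (ha'.trans hb'.symm))

lemma sigma1_eq_sum_div (m : ℕ) : (sigma1 m : ℝ) = ∑ d ∈ m.divisors, (m : ℝ) / d := by
  rw [sigma1, ← Nat.sum_div_divisors, Nat.cast_sum]
  exact sum_congr rfl fun d hd =>
    Nat.cast_div (Nat.dvd_of_mem_divisors hd) (Nat.cast_ne_zero.mpr (Nat.pos_of_mem_divisors hd).ne')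

lemma sum_sigma1_mul_add_one_le_sum_div (q K : ℕ) :
    ∑ n ∈ Icc 1 K, (sigma1 (q * n + 1) : ℝ) ≤
      ∑ d ∈ Icc 1 (q * K + 1) with d.Coprime q, ((q * K + 1 : ℕ) : ℝ) / d * (K / d + 1) := by
  set M := q * K + 1
  have hle : ∀ n ∈ Icc 1 K, q * n + 1 ≤ M := fun n hn =>
    Nat.succ_le_succ (Nat.mul_le_mul_left q (mem_Icc.mp hn).2)
  have hswap : ∀ n d, n ∈ Icc 1 K ∧ d ∈ (q * n + 1).divisors ↔
      n ∈ {n ∈ Icc 1 K | d ∣ q * n + 1} ∧ d ∈ {d ∈ Icc 1 M | d.Coprime q} := by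
    intro n d
    simp only [mem_filter, mem_Icc, Nat.mem_divisors]
    constructor
    · rintro ⟨hn, hd, -⟩
      exact ⟨⟨hn, hd⟩, ⟨Nat.pos_of_dvd_of_pos hd (Nat.succ_pos _),
        (Nat.le_of_dvd (Nat.succ_pos _) hd).trans (hle n (mem_Icc.mpr hn))⟩,
        Nat.Coprime.coprime_dvd_left hd ((Nat.coprime_mul_left_add_left 1 q n).mpr
          (Nat.coprime_one_left q))⟩
    · rintro ⟨⟨hn, hd⟩, -⟩
      exact ⟨hn, hd, Nat.succ_ne_zero _⟩
  calc ∑ n ∈ Icc 1 K, (sigma1 (q * n + 1) : ℝ)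
      ≤ ∑ n ∈ Icc 1 K, ∑ d ∈ (q * n + 1).divisors, (M : ℝ) / d := by
        gcongr with n hn
        rw [sigma1_eq_sum_div]
        gcongr
        exact_mod_cast hle n hn
    _ = ∑ d ∈ Icc 1 M with d.Coprime q, ∑ n ∈ Icc 1 K with d ∣ q * n + 1, (M : ℝ) / d :=
        sum_comm' hswap
    _ ≤ ∑ d ∈ Icc 1 M with d.Coprime q, (M : ℝ) / d * (K / d + 1) := by
        gcongr with d hd
        rw [sum_const, nsmul_eq_mul, mul_comm]
        gcongr
        calc (#{n ∈ Icc 1 K | d ∣ q * n + 1} : ℝ) ≤ (K / d : ℕ) + 1 := by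
              exact_mod_cast card_filter_dvd_mul_add_one_le (mem_filter.mp hd).2 K
          _ ≤ K / d + 1 := by gcongr; exact Nat.cast_div_le

lemma sum_sigma1_mul_add_one_le (q K : ℕ) :
    ∑ n ∈ Icc 1 K, (sigma1 (q * n + 1) : ℝ) ≤
      (q * K + 1 : ℕ) * (K * ∑ d ∈ Icc 1 (q * K + 1) with d.Coprime q, ((d : ℝ) ^ 2)⁻¹
        + ∑ d ∈ Icc 1 (q * K + 1), (d : ℝ)⁻¹) := by
  set M := q * K + 1
  have hinv : ∑ d ∈ Icc 1 M with d.Coprime q, (d : ℝ)⁻¹ ≤ ∑ d ∈ Icc 1 M, (d : ℝ)⁻¹ :=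
    sum_le_sum_of_subset_of_nonneg (filter_subset _ _) fun _ _ _ => by positivity
  calc ∑ n ∈ Icc 1 K, (sigma1 (q * n + 1) : ℝ)
      ≤ ∑ d ∈ Icc 1 M with d.Coprime q, (M : ℝ) / d * (K / d + 1) :=
        sum_sigma1_mul_add_one_le_sum_div q K
    _ = M * (K * ∑ d ∈ Icc 1 M with d.Coprime q, ((d : ℝ) ^ 2)⁻¹
          + ∑ d ∈ Icc 1 M with d.Coprime q, (d : ℝ)⁻¹) := by
        rw [mul_sum, ← sum_add_distrib, mul_sum]
        exact sum_congr rfl fun d _ => by ring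
    _ ≤ _ := by gcongr

lemma sum_inv_sq_coprime_le (q M : ℕ) :
    ∑ d ∈ Icc 1 M with d.Coprime q, ((d : ℝ) ^ 2)⁻¹ ≤
      ∑ d ∈ Icc 1 q with d.Coprime q, ((d : ℝ) ^ 2)⁻¹ + 2 / (q + 1) := by
  rw [← sum_filter_add_sum_filter_not _ (· ≤ q)]
  gcongr
  · intro d hd
    simp only [mem_filter, mem_Icc] at hd ⊢
    omega
  · refine (sum_le_sum_of_subset_of_nonneg (t := Ioo q (M + 1)) (fun d hd => ?_)
      fun _ _ _ => by positivity).trans (sum_Ioo_inv_sq_le q (M + 1))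
    simp only [mem_filter, mem_Icc, mem_Ioo] at hd ⊢
    omega

lemma sum_inv_sq_coprime_thirty_le (M : ℕ) :
    ∑ d ∈ Icc 1 M with d.Coprime 30, ((d : ℝ) ^ 2)⁻¹ ≤ 9 / 8 := by
  have hunits : {d ∈ Icc 1 30 | d.Coprime 30} = {1, 7, 11, 13, 17, 19, 23, 29} := by decide
  refine (sum_inv_sq_coprime_le 30 M).trans ?_
  rw [hunits]
  norm_num

lemma sum_inv_le_one_add_two_mul_sqrt (M : ℕ) : ∑ d ∈ Icc 1 M, (d : ℝ)⁻¹ ≤ 1 + 2 * √M := by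
  have hlog : Real.log M ≤ 2 * √M := by
    have := Real.log_le_rpow_div (Nat.cast_nonneg (α := ℝ) M) one_half_pos
    rw [Real.sqrt_eq_rpow]
    linarith
  have := harmonic_le_one_add_log M
  rw [harmonic_eq_sum_Icc] at this
  push_cast at this
  linarith

/-- For all sufficiently large `K`, `∑_{n ≤ K} σ(30n) > ∑_{n ≤ K} σ(30n+1)`. -/
theorem stmt_4 :
    ∃ K₀ : ℕ, 0 < K₀ ∧ ∀ K : ℕ, K₀ ≤ K →
      ∑ n ∈ Finset.Icc 1 K, sigma1 (30 * n + 1) < ∑ n ∈ Finset.Icc 1 K, sigma1 (30 * n) := by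
  refine ⟨50000, by norm_num, fun K hK => ?_⟩
  replace hK : (50000 : ℝ) ≤ K := by exact_mod_cast hK
  have hsqrt : 40 * √(30 * K + 1 : ℝ) ≤ K := by
    have h := Real.sqrt_le_sqrt (show (30 * K + 1 : ℝ) ≤ (K / 40) ^ 2 by nlinarith)
    rw [Real.sqrt_sq (by positivity)] at h
    linarith
  have hM : (30 * K + 1 : ℕ) = (30 * K + 1 : ℝ) := by push_cast; ring
  have hσ : sigma1 30 = 72 := by decide
  exact_mod_cast calc ∑ n ∈ Icc 1 K, (sigma1 (30 * n + 1) : ℝ)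
      ≤ (30 * K + 1 : ℕ) * (K * ∑ d ∈ Icc 1 (30 * K + 1) with d.Coprime 30, ((d : ℝ) ^ 2)⁻¹
        + ∑ d ∈ Icc 1 (30 * K + 1), (d : ℝ)⁻¹) := sum_sigma1_mul_add_one_le 30 K
    _ ≤ (30 * K + 1 : ℝ) * (K * (9 / 8) + (1 + 2 * √(30 * K + 1 : ℝ))) := by
        rw [hM]
        gcongr
        · exact sum_inv_sq_coprime_thirty_le _
        · exact_mod_cast sum_inv_le_one_add_two_mul_sqrt _
    _ < sigma1 30 * (K * (K + 1) / 2 : ℝ) := by rw [hσ]; push_cast; nlinarith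
    _ ≤ ∑ n ∈ Icc 1 K, (sigma1 (30 * n) : ℝ) := sigma1_mul_le_sum_sigma1_mul 30 K
end

section
/- As K → ∞, one has ∑_{n=1}^{K} σ(30n) = (319π²/72)·K² + O(K log K); that is, there exist constants C > 0 and K₀ such that for all K ≥ K₀, |∑_{n=1}^{K} σ(30n) − (319π²/72)·K²| ≤ C·K·log K. -/
open Finset Real

/-!
Splitting the divisors of `p m` according to divisibility by the prime `p` gives
`σ(p m) + p σ(m / p) [p ∣ m] = (p + 1) σ(m)`. Iterating this over the primes of a squarefree `q`
yields `σ(q m) = ∑_{d ∣ q} μ(d) d σ(q / d) σ(m / d) [d ∣ m]`, a divisor `d` being indexed by the set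
of primes dividing it. Summed over `m ≤ K`, this writes `∑ σ(q n)` as a combination of the partial
sums `Σ(K / d)` of `σ`. Exchanging summations, `Σ(x) = ∑_{d ≤ x} ⌊x/d⌋ (⌊x/d⌋ + 1) / 2`, which is
`(π² / 12) x² + O(x log x)` by `ζ(2) = π² / 6` (with tail `≤ 1 / x`) and the harmonic bound.
The main terms add up to `(π² / 12) ∏_{p ∣ q} (p + 1 - 1 / p) K²`, that is `(319 π² / 72) K²` for
`q = 30`.
-/

def sigmaQuot (d n : ℕ) : ℕ := if d ∣ n then sigma1 (n / d) else 0

lemma sigmaQuot_mul_self {p : ℕ} (hp : p ≠ 0) (m : ℕ) : sigmaQuot p (p * m) = sigma1 m := by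
  rw [sigmaQuot, if_pos (dvd_mul_right p m), Nat.mul_div_cancel_left m (Nat.pos_of_ne_zero hp)]

lemma sigmaQuot_of_not_dvd {d n : ℕ} (h : ¬ d ∣ n) : sigmaQuot d n = 0 := if_neg h

lemma sum_divisors_filter_dvd {p : ℕ} (hp : p ≠ 0) (n : ℕ) :
    ∑ d ∈ n.divisors with p ∣ d, d = p * sigmaQuot p n := by
  by_cases hpn : p ∣ n
  · obtain ⟨m, rfl⟩ := hpn
    rw [sigmaQuot_mul_self hp, sigma1, mul_sum]
    refine sum_nbij' (· / p) (p * ·) ?_ ?_ ?_ ?_ ?_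
    · intro d hd
      simp only [mem_filter, Nat.mem_divisors] at hd ⊢
      obtain ⟨⟨hdvd, hne⟩, e, rfl⟩ := hd
      rw [Nat.mul_div_cancel_left e (Nat.pos_of_ne_zero hp)]
      exact ⟨Nat.dvd_of_mul_dvd_mul_left (Nat.pos_of_ne_zero hp) hdvd, right_ne_zero_of_mul hne⟩
    · intro e he
      simp only [mem_filter, Nat.mem_divisors] at he ⊢
      exact ⟨⟨Nat.mul_dvd_mul_left p he.1, mul_ne_zero hp he.2⟩, dvd_mul_right p e⟩
    · intro d hd
      exact Nat.mul_div_cancel' (mem_filter.1 hd).2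
    · intro e _
      exact Nat.mul_div_cancel_left e (Nat.pos_of_ne_zero hp)
    · intro d hd
      exact (Nat.mul_div_cancel' (mem_filter.1 hd).2).symm
  · rw [sigmaQuot_of_not_dvd hpn, mul_zero, sum_eq_zero_iff]
    intro d hd
    simp only [mem_filter, Nat.mem_divisors] at hd
    exact absurd (hd.2.trans hd.1.1) hpn

lemma divisors_mul_filter_not_dvd {p : ℕ} (hp : p.Prime) (m : ℕ) :
    {d ∈ (p * m).divisors | ¬ p ∣ d} = {d ∈ m.divisors | ¬ p ∣ d} := by
  ext d
  simp only [mem_filter, Nat.mem_divisors, mul_ne_zero_iff, hp.ne_zero, ne_eq, not_false_eq_true,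
    true_and, and_congr_left_iff]
  intro hpd _
  exact ⟨((hp.coprime_iff_not_dvd.2 hpd)).symm.dvd_of_dvd_mul_left, (·.mul_left p)⟩

lemma sigma1_prime_mul_add {p : ℕ} (hp : p.Prime) (m : ℕ) :
    sigma1 (p * m) + p * sigmaQuot p m = (p + 1) * sigma1 m := by
  have hsplit (n : ℕ) : sigma1 n = p * sigmaQuot p n + ∑ d ∈ n.divisors with ¬ p ∣ d, d := by
    rw [← sum_divisors_filter_dvd hp.ne_zero, sigma1, sum_filter_add_sum_filter_not]
  rw [hsplit (p * m), sigmaQuot_mul_self hp.ne_zero, divisors_mul_filter_not_dvd hp, hsplit m]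
  ring

lemma sigmaQuot_mul (a d m : ℕ) :
    sigmaQuot (a * d) m = if a ∣ m then sigmaQuot d (m / a) else 0 := by
  by_cases ha : a ∣ m
  · simp only [sigmaQuot, if_pos ha, Nat.dvd_div_iff_mul_dvd ha, Nat.div_div_eq_div_mul]
  · rw [if_neg ha, sigmaQuot_of_not_dvd fun h => ha ((dvd_mul_right a d).trans h)]

lemma sigmaQuot_prime_mul_of_not_dvd {a Q : ℕ} (ha : a.Prime) (haQ : ¬ a ∣ Q) (m : ℕ) :
    sigmaQuot a (Q * m) = if a ∣ m then sigma1 (Q * (m / a)) else 0 := by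
  by_cases ham : a ∣ m
  · obtain ⟨k, rfl⟩ := ham
    rw [mul_left_comm, sigmaQuot_mul_self ha.ne_zero, if_pos (dvd_mul_right a k),
      Nat.mul_div_cancel_left k ha.pos]
  · rw [if_neg ham, sigmaQuot_of_not_dvd]
    exact fun h => (ha.dvd_mul.1 h).elim haQ ham

lemma prime_not_dvd_prod_of_notMem {a : ℕ} {s : Finset ℕ} (ha : a.Prime) (has : a ∉ s)
    (hs : ∀ p ∈ s, p.Prime) : ¬ a ∣ ∏ p ∈ s, p := by
  rw [ha.prime.dvd_finsetProd_iff]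
  rintro ⟨p, hp, hap⟩
  rw [(Nat.prime_dvd_prime_iff_eq ha (hs p hp)).1 hap] at has
  exact has hp

theorem sigma1_prod_mul {R : Type*} [CommRing R] {s : Finset ℕ} (hs : ∀ p ∈ s, p.Prime)
    (m : ℕ) : (sigma1 ((∏ p ∈ s, p) * m) : R) = ∑ t ∈ s.powerset,
      (∏ p ∈ t, -(p : R)) * (∏ p ∈ s \ t, ((p : R) + 1)) * sigmaQuot (∏ p ∈ t, p) m := by
  induction s using Finset.induction_on generalizing m with
  | empty => simp [sigmaQuot]
  | insert a s has ih =>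
    have ha := hs a (mem_insert_self a s)
    replace ih := ih fun p hp => hs p (mem_insert_of_mem hp)
    have hrec : (sigma1 (a * ((∏ p ∈ s, p) * m)) : R) = (a + 1) * sigma1 ((∏ p ∈ s, p) * m)
        - a * ((sigmaQuot a ((∏ p ∈ s, p) * m) : ℕ) : R) := by
      have h := congrArg (Nat.cast : ℕ → R) (sigma1_prime_mul_add ha ((∏ p ∈ s, p) * m))
      push_cast at h
      linear_combination h
    rw [sigmaQuot_prime_mul_of_not_dvd ha (prime_not_dvd_prod_of_notMem ha has
      fun p hp => hs p (mem_insert_of_mem hp)), Nat.cast_ite, Nat.cast_zero] at hrec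
    rw [prod_insert has, mul_assoc, hrec, sum_powerset_insert has, sub_eq_add_neg]
    simp only [ih]
    congr 1
    · rw [mul_sum]
      refine sum_congr rfl fun t ht => ?_
      have hat : a ∉ t := fun h => has (mem_powerset.1 ht h)
      rw [insert_sdiff_of_notMem s hat, prod_insert fun h => has (mem_sdiff.1 h).1]
      ring
    · have hat {t} (ht : t ∈ s.powerset) : a ∉ t := fun h => has (mem_powerset.1 ht h)
      by_cases ham : a ∣ m
      · rw [if_pos ham, mul_sum, ← sum_neg_distrib]
        refine sum_congr rfl fun t ht => ?_
        rw [prod_insert (hat ht), prod_insert (hat ht), insert_sdiff_insert,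
          sdiff_insert_of_notMem has, sigmaQuot_mul, if_pos ham]
        ring
      · rw [if_neg ham, mul_zero, neg_zero, eq_comm]
        refine sum_eq_zero fun t ht => ?_
        rw [prod_insert (hat ht), prod_insert (hat ht), sigmaQuot_mul, if_neg ham, Nat.cast_zero,
          mul_zero]

lemma sum_Icc_ite_dvd {M : Type*} [AddCommMonoid M] (g : ℕ → M) {d : ℕ} (hd : d ≠ 0) (K : ℕ) :
    ∑ n ∈ Icc 1 K, (if d ∣ n then g (n / d) else 0) = ∑ m ∈ Icc 1 (K / d), g m := by
  rw [← sum_filter]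
  have hd' := Nat.pos_of_ne_zero hd
  refine sum_nbij' (· / d) (d * ·) ?_ ?_ ?_ ?_ ?_
  · intro n hn
    simp only [mem_filter, mem_Icc] at hn ⊢
    obtain ⟨⟨h1, h2⟩, k, rfl⟩ := hn
    rw [Nat.mul_div_cancel_left k hd']
    refine ⟨Nat.pos_of_ne_zero ?_, (Nat.le_div_iff_mul_le hd').2 (by linarith)⟩
    rintro rfl
    simp at h1
  · intro m hm
    simp only [mem_filter, mem_Icc] at hm ⊢
    have := (Nat.le_div_iff_mul_le hd').1 hm.2
    exact ⟨⟨Nat.mul_pos hd' hm.1, by linarith⟩, dvd_mul_right d m⟩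
  · intro n hn
    exact Nat.mul_div_cancel' (mem_filter.1 hn).2
  · intro m _
    exact Nat.mul_div_cancel_left m hd'
  · intro n _
    rfl

def sumSigma (x : ℕ) : ℕ := ∑ m ∈ Icc 1 x, sigma1 m

lemma sum_sigmaQuot {d : ℕ} (hd : d ≠ 0) (K : ℕ) :
    ∑ n ∈ Icc 1 K, sigmaQuot d n = sumSigma (K / d) :=
  sum_Icc_ite_dvd sigma1 hd K

theorem sum_sigma1_prod_mul {R : Type*} [CommRing R] {s : Finset ℕ} (hs : ∀ p ∈ s, p.Prime)
    (K : ℕ) : ∑ n ∈ Icc 1 K, (sigma1 ((∏ p ∈ s, p) * n) : R) = ∑ t ∈ s.powerset,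
      (∏ p ∈ t, -(p : R)) * (∏ p ∈ s \ t, ((p : R) + 1)) * sumSigma (K / ∏ p ∈ t, p) := by
  simp only [sigma1_prod_mul hs]
  rw [sum_comm]
  refine sum_congr rfl fun t ht => ?_
  have ht0 : ∏ p ∈ t, p ≠ 0 :=
    prod_ne_zero_iff.2 fun p hp => (hs p (mem_powerset.1 ht hp)).ne_zero
  rw [← mul_sum, ← sum_sigmaQuot ht0, Nat.cast_sum]

lemma sum_Icc_id_mul_two (n : ℕ) : (∑ q ∈ Icc 1 n, q) * 2 = n * (n + 1) := by
  induction n with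
  | zero => rfl
  | succ n ih => rw [sum_Icc_succ_top (by omega), add_mul, ih]; ring

lemma sum_Icc_inv_sq_le_pi_sq_div_six (x : ℕ) :
    ∑ d ∈ Icc 1 x, ((d : ℝ) ^ 2)⁻¹ ≤ π ^ 2 / 6 :=
  sum_le_hasSum _ (fun _ _ => by positivity) (by simpa only [one_div] using hasSum_zeta_two)

lemma pi_sq_div_six_sub_le_sum_Icc_inv_sq {x : ℕ} (hx : x ≠ 0) :
    π ^ 2 / 6 - 1 / x ≤ ∑ d ∈ Icc 1 x, ((d : ℝ) ^ 2)⁻¹ := by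
  set f : ℕ → ℝ := fun n => ((n : ℝ) ^ 2)⁻¹
  have hf : HasSum f (π ^ 2 / 6) := by simpa only [one_div] using hasSum_zeta_two
  have hhead : ∑ i ∈ range (x + 1), f i = ∑ d ∈ Icc 1 x, f d := by
    rw [sum_range_succ', ← Ico_add_one_right_eq_Icc, sum_Ico_eq_sum_range]
    simp [f, add_comm]
  have htail : ∑' i, f (i + (x + 1)) ≤ 1 / x := by
    refine Real.tsum_le_of_sum_range_le (fun _ => by positivity) fun N => ?_
    calc ∑ i ∈ range N, f (i + (x + 1)) = ∑ i ∈ Ioc x (x + N), ((i : ℝ) ^ 2)⁻¹ := by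
          rw [← Ico_add_one_add_one_eq_Ioc, sum_Ico_eq_sum_range,
            show x + N + 1 - (x + 1) = N by omega]
          simp only [f, add_comm, add_left_comm]
      _ ≤ (x : ℝ)⁻¹ - ((x + N : ℕ) : ℝ)⁻¹ := sum_Ioc_inv_sq_le_sub hx (by omega)
      _ ≤ 1 / x := by rw [one_div]; linarith [show 0 ≤ ((x + N : ℕ) : ℝ)⁻¹ by positivity]
  have := hf.summable.sum_add_tsum_nat_add (x + 1)
  rw [hf.tsum_eq, hhead] at this
  linarith

lemma abs_floor_mul_floor_add_one_sub_sq_le {r : ℝ} (hr : 0 ≤ r) :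
    |(⌊r⌋₊ : ℝ) * (⌊r⌋₊ + 1) / 2 - r ^ 2 / 2| ≤ r / 2 := by
  have h1 := Nat.floor_le hr
  have h2 := Nat.lt_floor_add_one r
  have h3 : (0 : ℝ) ≤ ⌊r⌋₊ := Nat.cast_nonneg _
  rw [abs_le]
  constructor <;> nlinarith

lemma sumSigma_eq_sum_sum_Icc (x : ℕ) :
    sumSigma x = ∑ d ∈ Icc 1 x, ∑ q ∈ Icc 1 (x / d), q := by
  have hσ : ∀ m ∈ Icc 1 x, sigma1 m = ∑ d ∈ Icc 1 x, if d ∣ m then m / d else 0 := by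
    intro m hm
    rw [mem_Icc] at hm
    rw [← sum_filter, sigma1, ← Nat.sum_div_divisors]
    congr 1
    ext d
    simp only [mem_filter, mem_Icc, Nat.mem_divisors]
    constructor
    · rintro ⟨hd, -⟩
      exact ⟨⟨Nat.pos_of_dvd_of_pos hd hm.1, (Nat.le_of_dvd hm.1 hd).trans hm.2⟩, hd⟩
    · rintro ⟨-, hd⟩
      exact ⟨hd, by omega⟩
  rw [sumSigma, sum_congr rfl hσ, sum_comm]
  exact sum_congr rfl fun d hd => sum_Icc_ite_dvd id (by rw [mem_Icc] at hd; omega) x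

lemma sumSigma_eq_sum_Icc_floor (x : ℕ) :
    (sumSigma x : ℝ) = ∑ d ∈ Icc 1 x, (⌊(x : ℝ) / d⌋₊ : ℝ) * (⌊(x : ℝ) / d⌋₊ + 1) / 2 := by
  rw [sumSigma_eq_sum_sum_Icc, Nat.cast_sum]
  refine sum_congr rfl fun d _ => ?_
  rw [Nat.floor_div_eq_div, eq_div_iff two_ne_zero]
  exact_mod_cast sum_Icc_id_mul_two (x / d)

lemma abs_sumSigma_sub_le (x : ℕ) :
    |(sumSigma x : ℝ) - π ^ 2 / 12 * x ^ 2| ≤ x * (1 + log x) := by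
  rcases Nat.eq_zero_or_pos x with rfl | hx
  · simp [sumSigma]
  have hsplit : (sumSigma x : ℝ) - π ^ 2 / 12 * x ^ 2 =
      ∑ d ∈ Icc 1 x, ((⌊(x : ℝ) / d⌋₊ : ℝ) * (⌊(x : ℝ) / d⌋₊ + 1) / 2 - ((x : ℝ) / d) ^ 2 / 2)
        + x ^ 2 / 2 * (∑ d ∈ Icc 1 x, ((d : ℝ) ^ 2)⁻¹ - π ^ 2 / 6) := by
    have hsq (d : ℕ) : ((x : ℝ) / d) ^ 2 / 2 = x ^ 2 / 2 * ((d : ℝ) ^ 2)⁻¹ := by ring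
    rw [sumSigma_eq_sum_Icc_floor, sum_sub_distrib, mul_sub, mul_sum]
    simp only [hsq]
    ring
  have hfloor : |∑ d ∈ Icc 1 x, ((⌊(x : ℝ) / d⌋₊ : ℝ) * (⌊(x : ℝ) / d⌋₊ + 1) / 2
      - ((x : ℝ) / d) ^ 2 / 2)| ≤ x / 2 * (1 + log x) :=
    calc _ ≤ ∑ d ∈ Icc 1 x, (x : ℝ) / d / 2 := (abs_sum_le_sum_abs _ _).trans
          (sum_le_sum fun d _ => abs_floor_mul_floor_add_one_sub_sq_le (by positivity))
      _ = x / 2 * harmonic x := by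
          rw [harmonic_eq_sum_Icc, Rat.cast_sum, mul_sum]
          refine sum_congr rfl fun d _ => ?_
          push_cast
          ring
      _ ≤ x / 2 * (1 + log x) := by gcongr; exact harmonic_le_one_add_log x
  have hbasel : |x ^ 2 / 2 * (∑ d ∈ Icc 1 x, ((d : ℝ) ^ 2)⁻¹ - π ^ 2 / 6)| ≤ (x : ℝ) / 2 := by
    have hlow := pi_sq_div_six_sub_le_sum_Icc_inv_sq hx.ne'
    have hup := sum_Icc_inv_sq_le_pi_sq_div_six x
    rw [abs_mul, abs_of_nonneg (by positivity), abs_of_nonpos (by linarith)]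
    calc (x : ℝ) ^ 2 / 2 * -(∑ d ∈ Icc 1 x, ((d : ℝ) ^ 2)⁻¹ - π ^ 2 / 6)
        ≤ (x : ℝ) ^ 2 / 2 * (1 / x) := by gcongr; linarith
      _ = (x : ℝ) / 2 := by field_simp
  have hlog := Real.log_natCast_nonneg x
  rw [hsplit]
  calc _ ≤ _ := abs_add_le _ _
    _ ≤ (x : ℝ) / 2 * (1 + log x) + x / 2 := add_le_add hfloor hbasel
    _ ≤ x * (1 + log x) := by nlinarith

lemma pi_sq_div_twelve_le_one : π ^ 2 / 12 ≤ 1 := by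
  nlinarith [pi_lt_d2, pi_pos]

lemma abs_sumSigma_div_sub_le (K d : ℕ) :
    |(sumSigma (K / d) : ℝ) - π ^ 2 / 12 * ((K : ℝ) / d) ^ 2| ≤ 3 * K * (1 + log K) := by
  have hlogK := Real.log_natCast_nonneg K
  rcases Nat.eq_zero_or_pos d with rfl | hd
  · simp [sumSigma]
    positivity
  set y := K / d
  set r := (K : ℝ) / d
  have hyr : (y : ℝ) ≤ r := Nat.cast_div_le
  have hry : r < y + 1 := by
    simpa only [r, y, Nat.floor_div_eq_div] using Nat.lt_floor_add_one r
  have hrK : r ≤ K := div_le_self (Nat.cast_nonneg K) (by exact_mod_cast hd)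
  have hmain : (y : ℝ) * (1 + log y) ≤ K * (1 + log K) := by
    rcases Nat.eq_zero_or_pos y with hy | hy
    · rw [hy, Nat.cast_zero, zero_mul]; positivity
    · have hyK : (y : ℝ) ≤ K := hyr.trans hrK
      have := log_le_log (by exact_mod_cast hy) hyK
      have := log_natCast_nonneg y
      nlinarith
  have hsq : |π ^ 2 / 12 * (y : ℝ) ^ 2 - π ^ 2 / 12 * r ^ 2| ≤ 2 * (K : ℝ) := by
    have hc := pi_sq_div_twelve_le_one
    have hc0 : 0 ≤ π ^ 2 / 12 := by positivity
    have h : r ^ 2 - y ^ 2 ≤ 2 * (K : ℝ) := by nlinarith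
    rw [abs_le]
    constructor <;> nlinarith [mul_le_mul_of_nonneg_left (sub_nonneg.2 hyr) hc0]
  calc _ ≤ |(sumSigma y : ℝ) - π ^ 2 / 12 * (y : ℝ) ^ 2|
        + |π ^ 2 / 12 * (y : ℝ) ^ 2 - π ^ 2 / 12 * r ^ 2| := abs_sub_le _ _ _
    _ ≤ K * (1 + log K) + 2 * K := add_le_add ((abs_sumSigma_sub_le y).trans hmain) hsq
    _ ≤ 3 * K * (1 + log K) := by nlinarith

theorem abs_sum_sigma1_prod_mul_sub_le {s : Finset ℕ} (hs : ∀ p ∈ s, p.Prime) (K : ℕ) :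
    |∑ n ∈ Icc 1 K, (sigma1 ((∏ p ∈ s, p) * n) : ℝ)
        - π ^ 2 / 12 * (∏ p ∈ s, ((p : ℝ) + 1 - 1 / p)) * K ^ 2|
      ≤ 3 * (∏ p ∈ s, (2 * (p : ℝ) + 1)) * K * (1 + log K) := by
  set c : Finset ℕ → ℝ := fun t => (∏ p ∈ t, -(p : ℝ)) * ∏ p ∈ s \ t, ((p : ℝ) + 1)
  have hp0 {t} (ht : t ∈ s.powerset) {p} (hp : p ∈ t) : (p : ℝ) ≠ 0 :=
    Nat.cast_ne_zero.2 (hs p (mem_powerset.1 ht hp)).ne_zero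
  have hmain : π ^ 2 / 12 * (∏ p ∈ s, ((p : ℝ) + 1 - 1 / p)) * K ^ 2
      = ∑ t ∈ s.powerset, c t * (π ^ 2 / 12 * ((K : ℝ) / (∏ p ∈ t, p : ℕ)) ^ 2) := by
    have hsplit : ∏ p ∈ s, ((p : ℝ) + 1 - 1 / p) = ∏ p ∈ s, (-(1 / (p : ℝ)) + (p + 1)) :=
      prod_congr rfl fun p _ => by ring
    rw [hsplit, prod_add, mul_sum, sum_mul]
    refine sum_congr rfl fun t ht => ?_
    have hinv : ∏ p ∈ t, -(1 / (p : ℝ)) = (∏ p ∈ t, -(p : ℝ)) / (∏ p ∈ t, (p : ℝ)) ^ 2 := by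
      rw [← prod_pow, ← prod_div_distrib]
      refine prod_congr rfl fun p hp => ?_
      field_simp [hp0 ht hp]
    have hprod : ∏ p ∈ t, (p : ℝ) ≠ 0 := prod_ne_zero_iff.2 fun p hp => hp0 ht hp
    rw [hinv, Nat.cast_prod]
    field_simp
    ring
  have habs : ∑ t ∈ s.powerset, |c t| = ∏ p ∈ s, (2 * (p : ℝ) + 1) := by
    have hsplit : ∏ p ∈ s, (2 * (p : ℝ) + 1) = ∏ p ∈ s, ((p : ℝ) + (p + 1)) :=
      prod_congr rfl fun p _ => by ring
    rw [hsplit, prod_add]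
    refine sum_congr rfl fun t _ => ?_
    rw [abs_mul, abs_prod, abs_of_nonneg (by positivity : (0 : ℝ) ≤ ∏ p ∈ s \ t, ((p : ℝ) + 1))]
    simp only [abs_neg, Nat.abs_cast]
  rw [sum_sigma1_prod_mul hs, hmain, ← sum_sub_distrib]
  calc _ ≤ ∑ t ∈ s.powerset, |c t| * (3 * K * (1 + log K)) := (abs_sum_le_sum_abs _ _).trans
        (sum_le_sum fun t _ => by
          rw [← mul_sub, abs_mul]
          exact mul_le_mul_of_nonneg_left (abs_sumSigma_div_sub_le _ _) (abs_nonneg _))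
    _ = 3 * (∏ p ∈ s, (2 * (p : ℝ) + 1)) * K * (1 + log K) := by
        rw [← sum_mul, habs]
        ring

lemma one_le_log_natCast {K : ℕ} (hK : 3 ≤ K) : 1 ≤ log K := by
  rw [le_log_iff_exp_le (by positivity)]
  calc exp 1 ≤ 3 := (exp_one_lt_d9.trans (by norm_num)).le
    _ ≤ K := by exact_mod_cast hK

/-- `∑_{n ≤ K} σ(30n) = (319π²/72) K² + O(K log K)`. -/
theorem stmt_5 :
    ∃ C : ℝ, 0 < C ∧ ∃ K₀ : ℕ, ∀ K : ℕ, K₀ ≤ K →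
      |(∑ n ∈ Finset.Icc 1 K, sigma1 (30 * n) : ℝ) - (319 * π ^ 2 / 72) * (K : ℝ) ^ 2| ≤
        C * (K : ℝ) * Real.log K := by
  refine ⟨2310, by norm_num, 3, fun K hK => ?_⟩
  have h := abs_sum_sigma1_prod_mul_sub_le (s := {2, 3, 5}) (by norm_num) K
  have hprod : ∏ p ∈ ({2, 3, 5} : Finset ℕ), p = 30 := rfl
  have hmain :
      π ^ 2 / 12 * ∏ p ∈ ({2, 3, 5} : Finset ℕ), ((p : ℝ) + 1 - 1 / p) = 319 * π ^ 2 / 72 := by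
    norm_num
    ring
  have herr : ∏ p ∈ ({2, 3, 5} : Finset ℕ), (2 * (p : ℝ) + 1) = 385 := by norm_num
  rw [hprod, hmain, herr] at h
  have hlog := one_le_log_natCast hK
  calc _ ≤ 3 * 385 * (K : ℝ) * (1 + log K) := h
    _ ≤ 2310 * K * log K := by nlinarith [(Nat.cast_nonneg K : (0 : ℝ) ≤ K)]
end

section
/- There are infinitely many positive integers m for which the inequalities σ(2m+5) > σ(6m+17) and σ(5m+4) > σ(6m+7) hold simultaneously. -/
/-!
Choose `A` prime to `2` with `σ(A) ≥ 96 A` and `B` prime to `5 · 11 · 61 · A` with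
`σ(B) ≥ 48 B`: this is possible because `∑ 1/n` over `n ≡ 1 [MOD N]` diverges, and a product of
such `n` has all of them as divisors. On a progression `m = s + A B t` with `A ∣ 2m + 5` and
`B ∣ 5m + 4` we get `σ(2m + 5) ≥ 96 (2m + 5)` and `σ(5m + 4) ≥ 48 (5m + 4)`, while `6m + 17` and
`6m + 7` run through progressions `L t + c` with `c` prime to `L = 6AB`.

On such a progression, `σ(n)/n = ∑_{d ∣ n} 1/d` has average at most `6` over `t < T`: a divisor
above `T` is traded for its smaller complementary divisor, and `d ≤ T` divides at most
`T/d + 1` of the terms. So for each progression at most a quarter of the `t < T` have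
`σ(n) > 24 n`, and for large `T` some `t > M` is good for both; then
`σ(6m + 17) ≤ 24 (6m + 17) < 96 (2m + 5) ≤ σ(2m + 5)`, and similarly for `6m + 7`.
-/

open Finset

theorem sigma1_eq_mul_sum_inv (n : ℕ) : (sigma1 n : ℝ) = n * ∑ d ∈ n.divisors, (d : ℝ)⁻¹ := by
  rw [sigma1, ← Nat.sum_div_divisors, Nat.cast_sum, mul_sum]
  refine sum_congr rfl fun d hd => ?_
  rw [Nat.cast_div (Nat.dvd_of_mem_divisors hd)
    (Nat.cast_ne_zero.2 (Nat.pos_of_mem_divisors hd).ne'), div_eq_mul_inv]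

theorem mul_sum_inv_le_sigma1 {n : ℕ} {D : Finset ℕ} (hD : D ⊆ n.divisors) :
    n * ∑ d ∈ D, (d : ℝ)⁻¹ ≤ sigma1 n := by
  rw [sigma1_eq_mul_sum_inv]
  gcongr

theorem sigma1_mul_le (a k : ℕ) : sigma1 a * k ≤ sigma1 (a * k) := by
  rcases Nat.eq_zero_or_pos k with rfl | hk
  · simp
  calc sigma1 a * k = ∑ d ∈ a.divisors.image (· * k), d := by
        rw [sigma1, sum_mul, sum_image fun x _ y _ h => Nat.eq_of_mul_eq_mul_right hk h]
    _ ≤ sigma1 (a * k) := by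
      refine sum_le_sum_of_subset fun e he => ?_
      obtain ⟨d, hd, rfl⟩ := mem_image.1 he
      rw [Nat.mem_divisors] at hd ⊢
      exact ⟨mul_dvd_mul_right hd.1 k, mul_ne_zero hd.2 hk.ne'⟩

theorem mul_le_sigma1_of_dvd {a n C : ℕ} (h : a ∣ n) (ha : C * a ≤ sigma1 a) :
    C * n ≤ sigma1 n := by
  obtain ⟨k, rfl⟩ := h
  calc C * (a * k) = C * a * k := (mul_assoc ..).symm
    _ ≤ sigma1 a * k := Nat.mul_le_mul_right k ha
    _ ≤ sigma1 (a * k) := sigma1_mul_le a k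

theorem exists_coprime_mul_le_sigma1 {N : ℕ} (hN : N ≠ 0) (C : ℕ) :
    ∃ a, 0 < a ∧ Nat.Coprime a N ∧ C * a ≤ sigma1 a := by
  obtain ⟨u, hu⟩ :
      ∃ u : Finset ℕ, C < ∑ n ∈ u.filter (fun n : ℕ => (n : ZMod N) = 1), (n : ℝ)⁻¹ := by
    by_contra! h
    refine Real.not_summable_indicator_one_div_natCast hN 1 (summable_of_sum_le (c := C)
      (fun n => Set.indicator_nonneg (fun _ _ => by positivity) n) fun u => ?_)
    simpa only [Set.indicator_apply, Set.mem_ofPred_eq, one_div, ← sum_filter] using h u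
  set D := (u.filter fun n : ℕ => (n : ZMod N) = 1).erase 0
  have hD : ∀ d ∈ D, d ≠ 0 ∧ Nat.Coprime d N := fun d hd => by
    obtain ⟨hd0, hd⟩ := mem_erase.1 hd
    exact ⟨hd0, (ZMod.isUnit_iff_coprime d N).1 ((mem_filter.1 hd).2 ▸ isUnit_one)⟩
  have hDpos : 0 < ∏ d ∈ D, d := prod_pos fun d hd => Nat.pos_of_ne_zero (hD d hd).1
  refine ⟨∏ d ∈ D, d, hDpos, Nat.Coprime.prod_left fun d hd => (hD d hd).2, ?_⟩
  have hsum : (C : ℝ) ≤ ∑ d ∈ D, (d : ℝ)⁻¹ := by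
    rw [sum_erase _ (by simp)]
    exact hu.le
  have hdiv : D ⊆ (∏ d ∈ D, d).divisors := fun d hd =>
    Nat.mem_divisors.2 ⟨dvd_prod_of_mem _ hd, hDpos.ne'⟩
  have := mul_le_mul_of_nonneg_left hsum (Nat.cast_nonneg (α := ℝ) (∏ d ∈ D, d))
  exact_mod_cast (mul_comm (C : ℝ) _ ▸ this).trans (mul_sum_inv_le_sigma1 hdiv)

theorem sum_inv_divisors_le_two_mul {n T : ℕ} (hn : n ≤ T * T) :
    ∑ d ∈ n.divisors, (d : ℝ)⁻¹ ≤ 2 * ∑ d ∈ n.divisors with d ≤ T, (d : ℝ)⁻¹ := by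
  rw [← sum_filter_add_sum_filter_not n.divisors (· ≤ T), two_mul, add_le_add_iff_left]
  calc ∑ d ∈ n.divisors with ¬d ≤ T, (d : ℝ)⁻¹
      = ∑ d ∈ n.divisors, if ¬n / d ≤ T then ((n / d : ℕ) : ℝ)⁻¹ else 0 := by
        rw [sum_filter, Nat.sum_div_divisors n fun e => if ¬e ≤ T then (e : ℝ)⁻¹ else 0]
    _ ≤ ∑ d ∈ n.divisors with d ≤ T, (d : ℝ)⁻¹ := by
        rw [sum_filter]
        refine sum_le_sum fun d hd => ?_
        have hdn : d * (n / d) = n := Nat.mul_div_cancel' (Nat.dvd_of_mem_divisors hd)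
        have hd0 := Nat.pos_of_mem_divisors hd
        by_cases hbig : T < n / d
        · -- then `d * (n / d) ≤ T * T < (n / d) * (n / d)` forces `d < n / d`
          have hlt : d < n / d := by nlinarith
          have hdT : d ≤ T := by nlinarith
          rw [if_pos (not_le.2 hbig), if_pos hdT]
          exact inv_anti₀ (by exact_mod_cast hd0) (by exact_mod_cast hlt.le)
        · rw [if_neg (by omega)]
          split_ifs <;> positivity

theorem card_filter_dvd_mul_add_le {L c : ℕ} (hcL : Nat.Coprime c L) (T : ℕ) {d : ℕ} (hd : 0 < d) :
    #{t ∈ range T | d ∣ L * t + c} ≤ T / d + 1 := by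
  rcases eq_empty_or_nonempty {t ∈ range T | d ∣ L * t + c} with h | ⟨t₀, ht₀⟩
  · simp [h]
  have ht₀ := (mem_filter.1 ht₀).2
  have hdL : Nat.Coprime d L := ((Nat.coprime_mul_left_add_left c L t₀).2 hcL).coprime_dvd_left ht₀
  calc #{t ∈ range T | d ∣ L * t + c} ≤ #{t ∈ range T | t ≡ t₀ [MOD d]} := by
        refine card_le_card fun t ht => ?_
        rw [mem_filter] at ht ⊢
        have : L * t + c ≡ L * t₀ + c [MOD d] :=
          (Nat.modEq_zero_iff_dvd.2 ht.2).trans (Nat.modEq_zero_iff_dvd.2 ht₀).symm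
        exact ⟨ht.1, Nat.ModEq.cancel_left_of_coprime hdL (Nat.ModEq.add_right_cancel' c this)⟩
    _ = T / d + if t₀ % d < T % d then 1 else 0 := by
        rw [← Nat.count_eq_card_filter_range, Nat.count_modEq_card _ hd]
    _ ≤ T / d + 1 := by split_ifs <;> omega

theorem sum_inv_sq_Icc_le_two (T : ℕ) : ∑ d ∈ Icc 1 T, ((d : ℝ) ^ 2)⁻¹ ≤ 2 := by
  have h := sum_Ioo_inv_sq_le (α := ℝ) 0 (T + 1)
  rwa [show Ioo 0 (T + 1) = Icc 1 T by ext; simp; omega, Nat.cast_zero, zero_add, div_one] at h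

theorem sum_sum_inv_dvd_mul_add_le {L c : ℕ} (hcL : Nat.Coprime c L) (T : ℕ) :
    ∑ t ∈ range T, ∑ d ∈ Icc 1 T with d ∣ L * t + c, (d : ℝ)⁻¹ ≤ 3 * T := by
  rw [sum_comm' (t' := Icc 1 T) (s' := fun d => {t ∈ range T | d ∣ L * t + c})
    (by intro t d; simp only [mem_filter]; tauto)]
  calc ∑ d ∈ Icc 1 T, ∑ t ∈ range T with d ∣ L * t + c, (d : ℝ)⁻¹
      ≤ ∑ d ∈ Icc 1 T, (T * ((d : ℝ) ^ 2)⁻¹ + 1) := by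
        refine sum_le_sum fun d hd => ?_
        have hd1 := (mem_Icc.1 hd).1
        have hd0 : (1 : ℝ) ≤ d := by exact_mod_cast hd1
        have hcard : (#{t ∈ range T | d ∣ L * t + c} : ℝ) ≤ T / d + 1 :=
          (Nat.cast_le.2 (card_filter_dvd_mul_add_le hcL T hd1)).trans
            (by push_cast; gcongr; exact Nat.cast_div_le)
        rw [sum_const, nsmul_eq_mul]
        calc (#{t ∈ range T | d ∣ L * t + c} : ℝ) * (d : ℝ)⁻¹ ≤ (T / d + 1) * (d : ℝ)⁻¹ := by
              gcongr
          _ = T * ((d : ℝ) ^ 2)⁻¹ + (d : ℝ)⁻¹ := by field_simp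
          _ ≤ T * ((d : ℝ) ^ 2)⁻¹ + 1 := by gcongr; exact inv_le_one_of_one_le₀ hd0
    _ ≤ 3 * T := by
        rw [sum_add_distrib, ← mul_sum, sum_const, Nat.card_Icc, add_tsub_cancel_right,
          nsmul_one]
        have := mul_le_mul_of_nonneg_left (sum_inv_sq_Icc_le_two T) (Nat.cast_nonneg (α := ℝ) T)
        linarith

theorem sum_sigma1_div_mul_add_le {L c T : ℕ} (hcL : Nat.Coprime c L) (hT : L + c ≤ T) :
    ∑ t ∈ range T, (sigma1 (L * t + c) : ℝ) / (L * t + c : ℕ) ≤ 6 * T := by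
  calc ∑ t ∈ range T, (sigma1 (L * t + c) : ℝ) / (L * t + c : ℕ)
      ≤ ∑ t ∈ range T, 2 * ∑ d ∈ Icc 1 T with d ∣ L * t + c, (d : ℝ)⁻¹ := by
        refine sum_le_sum fun t ht => ?_
        have hn : L * t + c ≤ T * T := by
          have := mem_range.1 ht
          nlinarith
        rcases Nat.eq_zero_or_pos (L * t + c) with h0 | hpos
        · simp only [h0, sigma1, Nat.divisors_zero, sum_empty, Nat.cast_zero, zero_div]
          positivity
        rw [sigma1_eq_mul_sum_inv, mul_div_cancel_left₀ _ (by positivity)]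
        refine (sum_inv_divisors_le_two_mul hn).trans ?_
        gcongr
        intro d hd
        simp only [mem_filter, Nat.mem_divisors, mem_Icc] at hd ⊢
        exact ⟨⟨Nat.pos_of_dvd_of_pos hd.1.1 hpos, hd.2⟩, hd.1.1⟩
    _ = 2 * ∑ t ∈ range T, ∑ d ∈ Icc 1 T with d ∣ L * t + c, (d : ℝ)⁻¹ := (mul_sum ..).symm
    _ ≤ 6 * T := by linarith [sum_sum_inv_dvd_mul_add_le hcL T]

theorem card_filter_lt_sigma1_le {L c T : ℕ} (hcL : Nat.Coprime c L) (hT : L + c ≤ T) (C : ℕ) :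
    #{t ∈ range T | C * (L * t + c) < sigma1 (L * t + c)} * C ≤ 6 * T := by
  suffices (#{t ∈ range T | C * (L * t + c) < sigma1 (L * t + c)} : ℝ) * C ≤ 6 * T by
    exact_mod_cast this
  calc (#{t ∈ range T | C * (L * t + c) < sigma1 (L * t + c)} : ℝ) * C
      ≤ ∑ t ∈ range T with C * (L * t + c) < sigma1 (L * t + c),
          (sigma1 (L * t + c) : ℝ) / (L * t + c : ℕ) := by
        rw [← nsmul_eq_mul]
        refine card_nsmul_le_sum _ _ _ fun t ht => ?_
        have h := (mem_filter.1 ht).2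
        have hpos : (0 : ℝ) < (L * t + c : ℕ) := by
          refine Nat.cast_pos.2 (Nat.pos_of_ne_zero fun h0 => ?_)
          simp [h0, sigma1] at h
        rw [le_div_iff₀ hpos]
        exact_mod_cast h.le
    _ ≤ ∑ t ∈ range T, (sigma1 (L * t + c) : ℝ) / (L * t + c : ℕ) :=
        sum_le_sum_of_subset_of_nonneg (filter_subset _ _) fun _ _ _ => by positivity
    _ ≤ 6 * T := sum_sigma1_div_mul_add_le hcL hT

theorem exists_gt_sigma1_le_mul_pair {L c c' : ℕ} (hc : Nat.Coprime c L) (hc' : Nat.Coprime c' L)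
    (M : ℕ) : ∃ t, M < t ∧ sigma1 (L * t + c) ≤ 24 * (L * t + c) ∧
      sigma1 (L * t + c') ≤ 24 * (L * t + c') := by
  by_contra! h
  set T := 2 * M + 3 + L + c + c'
  have hbad := card_filter_lt_sigma1_le hc (T := T) (by omega) 24
  have hbad' := card_filter_lt_sigma1_le hc' (T := T) (by omega) 24
  have hsub : Ioo M T ⊆ {t ∈ range T | 24 * (L * t + c) < sigma1 (L * t + c)} ∪
      {t ∈ range T | 24 * (L * t + c') < sigma1 (L * t + c')} := by
    intro t ht
    obtain ⟨hMt, htT⟩ := mem_Ioo.1 ht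
    simp only [mem_union, mem_filter, mem_range]
    by_cases hgood : sigma1 (L * t + c) ≤ 24 * (L * t + c)
    · exact .inr ⟨htT, h t hMt hgood⟩
    · exact .inl ⟨htT, not_le.1 hgood⟩
  have := (card_le_card hsub).trans (card_union_le _ _)
  rw [Nat.card_Ioo] at this
  omega

theorem exists_dvd_mul_add {a n : ℕ} (hn : n ≠ 0) (h : Nat.Coprime a n) (b : ℕ) :
    ∃ x, n ∣ a * x + b := by
  have : NeZero n := ⟨hn⟩
  obtain ⟨u, hu⟩ := (ZMod.isUnit_iff_coprime a n).2 h
  refine ⟨((-b : ZMod n) * ↑u⁻¹).val, (ZMod.natCast_eq_zero_iff _ _).1 ?_⟩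
  push_cast
  rw [ZMod.natCast_zmod_val, ← hu, mul_left_comm, Units.mul_inv, mul_one, neg_add_cancel]

theorem exists_dvd_mul_add_and_dvd_mul_add {a a' A B : ℕ} (hA : A ≠ 0) (hB : B ≠ 0)
    (ha : Nat.Coprime a A) (ha' : Nat.Coprime a' B) (hAB : Nat.Coprime A B) (b b' : ℕ) :
    ∃ s, A ∣ a * s + b ∧ B ∣ a' * s + b' := by
  obtain ⟨x, hx⟩ := exists_dvd_mul_add hA ha b
  obtain ⟨y, hy⟩ := exists_dvd_mul_add hB (Nat.Coprime.mul_left ha' hAB) (a' * x + b')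
  refine ⟨x + A * y, ?_, ?_⟩
  · rw [show a * (x + A * y) + b = a * x + b + A * (a * y) by ring]
    exact dvd_add hx (dvd_mul_right _ _)
  · rwa [show a' * (x + A * y) + b' = a' * A * y + (a' * x + b') by ring]

theorem Nat.Coprime.of_mul_sub_mul_eq {n b B r : ℕ} {u v : ℤ} (hb : B ∣ b)
    (h : u * n - v * b = r) (hr : Nat.Coprime r B) : Nat.Coprime n B := by
  rw [← Nat.isCoprime_iff_coprime] at hr ⊢
  obtain ⟨k, rfl⟩ := hb
  obtain ⟨x, y, hxy⟩ := hr
  exact ⟨x * u, y - x * v * k, by push_cast at h; linear_combination x * h + hxy⟩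

theorem coprime_six_mul_add_of_dvd {A B m : ℕ} (hA : Nat.Coprime A 2)
    (hB : Nat.Coprime B (11 * 61)) (hmA : A ∣ 2 * m + 5) (hmB : B ∣ 5 * m + 4) :
    Nat.Coprime (6 * m + 17) (6 * (A * B)) ∧ Nat.Coprime (6 * m + 7) (6 * (A * B)) := by
  have hB11 : Nat.Coprime 11 B := (hB.coprime_dvd_right (dvd_mul_right 11 61)).symm
  have hB61 : Nat.Coprime 61 B := (hB.coprime_dvd_right (dvd_mul_left 61 11)).symm
  constructor
  · refine ((Nat.coprime_mul_left_add_left 17 6 m).2 (by norm_num)).mul_right (.mul_right ?_ ?_)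
    · exact .of_mul_sub_mul_eq (u := 1) (v := 3) (r := 2) hmA (by push_cast; ring) hA.symm
    · exact .of_mul_sub_mul_eq (u := 5) (v := 6) (r := 61) hmB (by push_cast; ring) hB61
  · refine ((Nat.coprime_mul_left_add_left 7 6 m).2 (by norm_num)).mul_right (.mul_right ?_ ?_)
    · exact .of_mul_sub_mul_eq (u := -1) (v := -3) (r := 8) hmA (by push_cast; ring)
        (hA.symm.pow_left 3)
    · exact .of_mul_sub_mul_eq (u := 5) (v := 6) (r := 11) hmB (by push_cast; ring) hB11

theorem dvd_mul_add_mul_add_of_dvd {a x b s : ℕ} (h : a ∣ x * s + b) (k : ℕ) :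
    a ∣ x * (s + a * k) + b := by
  rw [show x * (s + a * k) + b = x * s + b + a * (x * k) by ring]
  exact dvd_add h (dvd_mul_right a _)

/-- There are infinitely many positive integers `m` with `σ(2m+5) > σ(6m+17)` and
`σ(5m+4) > σ(6m+7)` simultaneously. -/
theorem stmt_10 :
    {m : ℕ | 0 < m ∧ sigma1 (6 * m + 17) < sigma1 (2 * m + 5) ∧
      sigma1 (6 * m + 7) < sigma1 (5 * m + 4)}.Infinite := by
  obtain ⟨A, hA, hA2, hσA⟩ := exists_coprime_mul_le_sigma1 two_ne_zero 96
  obtain ⟨B, hB, hBN, hσB⟩ :=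
    exists_coprime_mul_le_sigma1 (N := 5 * 11 * 61 * A) (by positivity) 48
  have hB5 : Nat.Coprime B 5 := hBN.coprime_dvd_right ⟨11 * 61 * A, by ring⟩
  have hBA : Nat.Coprime B A := hBN.coprime_dvd_right (dvd_mul_left A _)
  have hB11_61 : Nat.Coprime B (11 * 61) := hBN.coprime_dvd_right ⟨5 * A, by ring⟩
  obtain ⟨s, hsA, hsB⟩ :=
    exists_dvd_mul_add_and_dvd_mul_add hA.ne' hB.ne' hA2.symm hB5.symm hBA.symm 5 4
  obtain ⟨hc, hc'⟩ := coprime_six_mul_add_of_dvd hA2 hB11_61 hsA hsB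
  refine Set.infinite_of_forall_exists_gt fun M => ?_
  obtain ⟨t, hMt, h17, h7⟩ := exists_gt_sigma1_le_mul_pair hc hc' M
  have h2 := mul_le_sigma1_of_dvd (dvd_mul_add_mul_add_of_dvd hsA (B * t)) hσA
  have h5 := mul_le_sigma1_of_dvd (dvd_mul_add_mul_add_of_dvd hsB (A * t)) hσB
  rw [mul_left_comm B A t] at h5
  rw [show 6 * (A * B) * t + (6 * s + 17) = 6 * (s + A * (B * t)) + 17 by ring] at h17
  rw [show 6 * (A * B) * t + (6 * s + 7) = 6 * (s + A * (B * t)) + 7 by ring] at h7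
  have : t ≤ A * (B * t) := Nat.le_mul_of_pos_left _ hA |>.trans' (Nat.le_mul_of_pos_left t hB)
  exact ⟨s + A * (B * t), ⟨by omega, by omega, by omega⟩, by omega⟩
end

section
/- There exist a constant c > 0 and x₀ > 0 such that for all real x ≥ x₀, the number of positive integers m ≤ x satisfying both σ(2m+5) > σ(6m+17) and σ(5m+4) > σ(6m+7) is at least c·x/(log x)². -/
/-!
Take `m` in the residue class `m ≡ r (mod 4A)`, where `A = ∏_{2 < p < 53} p⁴` has abundancy
`σ(A)/A > 25/7` and `r` is chosen so that `A ∣ 2m+5` and `4 ∣ 5m+4`. Then `σ(2m+5)/(2m+5) > 25/7`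
and `σ(5m+4)/(5m+4) ≥ 7/4`, so both inequalities hold as soon as `6m+17` and `6m+7` have
abundancy at most `8/7`. Because `A ∣ 2m+5`, neither `6m+17` nor `6m+7` has a prime factor below
`53`, so summing `σ(n)/n - 1 = ∑_{1 < e ∣ n} 1/e` over the class gives at most
`(x/4A) ∑_{e ≥ 53} e⁻² + O(log x)`. By Markov's inequality the exceptional `m` make up at most a
proportion `28/53` of the class, so `≫ x` integers `m ≤ x` qualify, far more than `x/(log x)²`.
-/

open Finset Real

lemma sigma1_eq_sigma_one (n : ℕ) : sigma1 n = ArithmeticFunction.sigma 1 n :=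
  (ArithmeticFunction.sigma_one_apply n).symm

lemma sigma1_prod_pow {s : Finset ℕ} (hs : ∀ p ∈ s, p.Prime) (k : ℕ) :
    sigma1 (∏ p ∈ s, p ^ k) = ∏ p ∈ s, ∑ i ∈ range (k + 1), p ^ i := by
  have hcop : (s : Set ℕ).Pairwise (Function.onFun Nat.Coprime fun p => p ^ k) :=
    fun p hp q hq hpq => Nat.Coprime.pow k k ((Nat.coprime_primes (hs p hp) (hs q hq)).2 hpq)
  rw [sigma1_eq_sigma_one, ArithmeticFunction.isMultiplicative_sigma.map_prod _ s hcop]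
  exact prod_congr rfl fun p hp => ArithmeticFunction.sigma_one_apply_prime_pow (hs p hp)

namespace Nat

lemma abundancyIndex_mul_self (n : ℕ) : n.abundancyIndex * n = sigma1 n := by
  rcases eq_or_ne n 0 with rfl | hn
  · simp [abundancyIndex, sigma1]
  · rw [abundancyIndex, div_mul_cancel₀ _ (by exact_mod_cast hn), sigma1, Nat.cast_sum]

lemma abundancyIndex_eq_sum_inv (n : ℕ) :
    n.abundancyIndex = ∑ d ∈ n.divisors, (d : ℚ)⁻¹ := by
  rw [abundancyIndex, Nat.cast_sum, sum_div, ← Nat.sum_div_divisors n fun d => (d : ℚ)⁻¹]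
  refine sum_congr rfl fun d hd => ?_
  have hdn : d ∣ n := (mem_divisors.1 hd).1
  have hd0 : (d : ℚ) ≠ 0 := by exact_mod_cast (pos_of_mem_divisors hd).ne'
  rw [Nat.cast_div hdn hd0, inv_div]

lemma abundancyIndex_sub_one {n : ℕ} (hn : n ≠ 0) :
    n.abundancyIndex - 1 = ∑ d ∈ n.divisors.erase 1, (d : ℚ)⁻¹ := by
  rw [abundancyIndex_eq_sum_inv, ← add_sum_erase _ _ (one_mem_divisors.2 hn)]
  simp

end Nat

lemma sigma1_lt_sigma1_of_abundancyIndex_le {k a n : ℕ} {α : ℚ} (hk : k.abundancyIndex ≤ α)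
    (han : a ∣ n) (hn : n ≠ 0) (hα : α * k < a.abundancyIndex * n) : sigma1 k < sigma1 n := by
  have hI : a.abundancyIndex ≤ n.abundancyIndex := Nat.abundancyIndex_le_of_dvd hn han
  have : (sigma1 k : ℚ) < sigma1 n := by
    rw [← Nat.abundancyIndex_mul_self, ← Nat.abundancyIndex_mul_self]
    calc k.abundancyIndex * k ≤ α * k := by gcongr
      _ < a.abundancyIndex * n := hα
      _ ≤ n.abundancyIndex * n := by gcongr
  exact_mod_cast this

lemma card_filter_abundancyIndex_gt_le (S E : Finset ℕ) (f : ℕ → ℕ) (τ : ℚ)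
    (hf : ∀ m ∈ S, f m ≠ 0) (hE : ∀ m ∈ S, ∀ e ∈ (f m).divisors, e ≠ 1 → e ∈ E) :
    τ * #{m ∈ S | 1 + τ < (f m).abundancyIndex} ≤ ∑ e ∈ E, (#{m ∈ S | e ∣ f m} : ℚ) / e := by
  have hexcess : ∀ m ∈ S,
      (f m).abundancyIndex - 1 ≤ ∑ e ∈ E, if e ∣ f m then (e : ℚ)⁻¹ else 0 := by
    intro m hm
    rw [Nat.abundancyIndex_sub_one (hf m hm), ← sum_filter]
    refine sum_le_sum_of_subset_of_nonneg (fun e he => ?_) fun _ _ _ => by positivity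
    obtain ⟨he1, he⟩ := mem_erase.1 he
    exact mem_filter.2 ⟨hE m hm e he he1, (Nat.mem_divisors.1 he).1⟩
  calc τ * #{m ∈ S | 1 + τ < (f m).abundancyIndex}
      = ∑ m ∈ S with 1 + τ < (f m).abundancyIndex, τ := by rw [sum_const, nsmul_eq_mul, mul_comm]
    _ ≤ ∑ m ∈ S with 1 + τ < (f m).abundancyIndex, ((f m).abundancyIndex - 1) :=
        sum_le_sum fun m hm => by linarith [(mem_filter.1 hm).2]
    _ ≤ ∑ m ∈ S, ((f m).abundancyIndex - 1) :=
        sum_le_sum_of_subset_of_nonneg (filter_subset _ _) fun m hm _ => by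
          rw [Nat.abundancyIndex_sub_one (hf m hm)]; positivity
    _ ≤ ∑ m ∈ S, ∑ e ∈ E, if e ∣ f m then (e : ℚ)⁻¹ else 0 := sum_le_sum hexcess
    _ = ∑ e ∈ E, (#{m ∈ S | e ∣ f m} : ℚ) / e := by
        rw [sum_comm]
        simp only [← sum_filter, sum_const, nsmul_eq_mul, div_eq_mul_inv]

lemma card_filter_modEq_le (X : ℕ) {D : ℕ} (hD : 0 < D) (v : ℕ) :
    (#{m ∈ Icc 1 X | m ≡ v [MOD D]} : ℚ) ≤ X / D + 2 := by
  have hcount : #{m ∈ Icc 1 X | m ≡ v [MOD D]} ≤ X / D + 2 := by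
    calc #{m ∈ Icc 1 X | m ≡ v [MOD D]} ≤ #{m ∈ range (X + 1) | m ≡ v [MOD D]} :=
          card_le_card (filter_subset_filter _ fun m hm => by
            simp only [mem_Icc, mem_range] at hm ⊢; omega)
      _ = (X + 1) / D + if v % D < (X + 1) % D then 1 else 0 := by
          rw [← Nat.count_eq_card_filter_range, Nat.count_modEq_card _ hD]
      _ ≤ X / D + 2 := by rw [Nat.succ_div]; split_ifs <;> omega
  calc (#{m ∈ Icc 1 X | m ≡ v [MOD D]} : ℚ) ≤ ((X / D + 2 : ℕ) : ℚ) := by exact_mod_cast hcount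
    _ ≤ X / D + 2 := by push_cast; linarith [Nat.cast_div_le (α := ℚ) (m := X) (n := D)]

lemma card_filter_modEq_dvd_le (X : ℕ) {D e : ℕ} (hD : 0 < D) (he : 0 < e) (a c v : ℕ)
    (hcop : Nat.Coprime e (a * D)) :
    (#{m ∈ Icc 1 X | m ≡ v [MOD D] ∧ e ∣ a * m + c} : ℚ) ≤ X / (D * e) + 2 := by
  rcases eq_empty_or_nonempty {m ∈ Icc 1 X | m ≡ v [MOD D] ∧ e ∣ a * m + c} with h | ⟨m₀, hm₀⟩
  · rw [h, card_empty, Nat.cast_zero]; positivity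
  obtain ⟨-, hm₀v, hm₀e⟩ := mem_filter.1 hm₀
  have hsub : {m ∈ Icc 1 X | m ≡ v [MOD D] ∧ e ∣ a * m + c} ⊆
      {m ∈ Icc 1 X | m ≡ m₀ [MOD D * e]} := by
    refine monotone_filter_right _ fun m _ ⟨hmv, hme⟩ => ?_
    have hmodD : m ≡ m₀ [MOD D] := hmv.trans hm₀v.symm
    have hmode : a * m ≡ a * m₀ [MOD e] := Nat.ModEq.add_right_cancel' c
      ((Nat.modEq_zero_iff_dvd.2 hme).trans (Nat.modEq_zero_iff_dvd.2 hm₀e).symm)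
    exact (Nat.modEq_and_modEq_iff_modEq_mul (Nat.Coprime.coprime_mul_left_right hcop).symm).1
      ⟨hmodD, hmode.cancel_left_of_coprime (Nat.Coprime.coprime_mul_right_right hcop)⟩
  calc (#{m ∈ Icc 1 X | m ≡ v [MOD D] ∧ e ∣ a * m + c} : ℚ)
      ≤ #{m ∈ Icc 1 X | m ≡ m₀ [MOD D * e]} := by exact_mod_cast card_le_card hsub
    _ ≤ X / (D * e : ℕ) + 2 := card_filter_modEq_le X (Nat.mul_pos hD he) m₀
    _ = X / (D * e) + 2 := by push_cast; ring

lemma eventually_add_mul_log_le (b c : ℝ) {a : ℝ} (ha : 0 < a) :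
    ∀ᶠ x : ℝ in Filter.atTop, b + c * log x ≤ a * x := by
  have ho : (fun x => b + c * log x) =o[Filter.atTop] id :=
    (Asymptotics.isLittleO_const_id_atTop b).add (isLittleO_log_id_atTop.const_mul_left c)
  filter_upwards [ho.bound ha, Filter.eventually_ge_atTop 0] with x hx hx0
  rw [Real.norm_eq_abs, id, Real.norm_of_nonneg hx0] at hx
  exact (le_abs_self _).trans hx

namespace SigmaComparison

def smallOddPrimes : Finset ℕ := (Nat.primesBelow 53).erase 2

def abundantOdd : ℕ := ∏ p ∈ smallOddPrimes, p ^ 4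

def modulus : ℕ := 4 * abundantOdd

-- `2 * residue + 5 = 5 * abundantOdd`, and `8 ∣ residue` because `abundantOdd ≡ 1 [MOD 16]`.
def residue : ℕ := 5 * (abundantOdd - 1) / 2

lemma prime_of_mem_smallOddPrimes {p : ℕ} (hp : p ∈ smallOddPrimes) : p.Prime :=
  (Nat.mem_primesBelow.1 (mem_of_mem_erase hp)).2

lemma prime_dvd_abundantOdd_iff {p : ℕ} (hp : p.Prime) : p ∣ abundantOdd ↔ p ∈ smallOddPrimes := by
  refine ⟨fun h => ?_, fun h => (dvd_pow_self p four_ne_zero).trans (dvd_prod_of_mem _ h)⟩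
  obtain ⟨q, hq, hpq⟩ := (Prime.dvd_finsetProd_iff hp.prime _).1 h
  rwa [(Nat.prime_dvd_prime_iff_eq hp (prime_of_mem_smallOddPrimes hq)).1 (hp.dvd_of_dvd_pow hpq)]

lemma le_abundancyIndex_abundantOdd : 25 / 7 ≤ abundantOdd.abundancyIndex := by
  have h : 25 * abundantOdd ≤ 7 * sigma1 abundantOdd := by
    rw [abundantOdd, sigma1_prod_pow fun p => prime_of_mem_smallOddPrimes]
    decide
  have hA : (0 : ℚ) < abundantOdd := by exact_mod_cast (show 0 < abundantOdd by decide)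
  have h' : (25 : ℚ) * abundantOdd ≤ 7 * (abundantOdd.abundancyIndex * abundantOdd) := by
    rw [Nat.abundancyIndex_mul_self]; exact_mod_cast h
  exact le_of_mul_le_mul_right (by linarith) hA

lemma abundancyIndex_four : (4 : ℕ).abundancyIndex = 7 / 4 := by
  have h := Nat.abundancyIndex_mul_self 4
  rw [show sigma1 4 = 7 by decide] at h
  push_cast at h
  linarith

lemma abundantOdd_dvd_two_mul_add_five {m : ℕ} (hm : m ≡ residue [MOD modulus]) :
    abundantOdd ∣ 2 * m + 5 := by
  have hr : abundantOdd ∣ 2 * residue + 5 := by decide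
  exact Nat.modEq_zero_iff_dvd.1
    ((((hm.of_mul_left 4).mul_left 2).add_right 5).trans (Nat.modEq_zero_iff_dvd.2 hr))

lemma four_dvd_five_mul_add_four {m : ℕ} (hm : m ≡ residue [MOD modulus]) : 4 ∣ 5 * m + 4 := by
  have hr : 4 ∣ residue := by decide
  have h4 : m % 4 = residue % 4 := hm.of_mul_right abundantOdd
  omega

lemma residue_le {m : ℕ} (hm : m ≡ residue [MOD modulus]) : residue ≤ m := by
  have hr : residue < modulus := by decide
  calc residue = m % modulus := by rw [hm, Nat.mod_eq_of_lt hr]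
    _ ≤ m := Nat.mod_le m modulus

lemma coprime_two_mul_add_five (m : ℕ) {c : ℕ} (hc : c = 7 ∨ c = 17) :
    Nat.Coprime (2 * m + 5) (6 * m + c) := by
  refine Nat.coprime_of_dvd fun p hp h5 hc' => ?_
  have h8 : p ∣ 8 := by
    rcases hc with rfl | rfl
    · rw [← Nat.dvd_add_right hc', show 6 * m + 7 + 8 = 3 * (2 * m + 5) by ring]
      exact h5.mul_left 3
    · rw [show 6 * m + 17 = 3 * (2 * m + 5) + 2 by ring, Nat.dvd_add_right (h5.mul_left 3)] at hc'
      exact hc'.trans (by norm_num)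
  obtain rfl : p = 2 :=
    (Nat.prime_dvd_prime_iff_eq hp Nat.prime_two).1 (hp.dvd_of_dvd_pow (n := 3) h8)
  omega

lemma le_minFac_six_mul_add {m c : ℕ} (hm : m ≡ residue [MOD modulus]) (hc : c = 7 ∨ c = 17) :
    53 ≤ (6 * m + c).minFac := by
  refine (Nat.le_minFac.2 fun p hp hpd => ?_).resolve_left (by omega)
  by_contra hlt
  have hp53 : p ∈ Nat.primesBelow 53 := Nat.mem_primesBelow.2 ⟨by omega, hp⟩
  rcases eq_or_ne p 2 with rfl | hp2
  · omega
  have hpA : p ∣ 2 * m + 5 := ((prime_dvd_abundantOdd_iff hp).2 (mem_erase.2 ⟨hp2, hp53⟩)).trans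
    (abundantOdd_dvd_two_mul_add_five hm)
  exact hp.one_lt.ne' (((coprime_two_mul_add_five m hc).coprime_dvd_left hpA).eq_one_of_dvd hpd)

lemma coprime_six_mul_modulus_of_dvd {m c e : ℕ} (hm : m ≡ residue [MOD modulus])
    (hc : c = 7 ∨ c = 17) (he : e ∣ 6 * m + c) : Nat.Coprime e (6 * modulus) := by
  refine Nat.coprime_of_dvd fun p hp hpe hpM => ?_
  have h53 : 53 ≤ p :=
    (le_minFac_six_mul_add hm hc).trans (Nat.minFac_le_of_dvd hp.two_le (hpe.trans he))
  rw [show 6 * modulus = 24 * abundantOdd by rw [modulus]; ring] at hpM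
  rcases (Nat.Prime.dvd_mul hp).1 hpM with h24 | hA
  · have := Nat.le_of_dvd (by norm_num) h24
    omega
  · have := (Nat.mem_primesBelow.1 (mem_of_mem_erase ((prime_dvd_abundantOdd_iff hp).1 hA))).1
    omega

def progression (X : ℕ) : Finset ℕ := {m ∈ Icc 1 X | m ≡ residue [MOD modulus]}

def solutions (X : ℕ) : Finset ℕ :=
  {m ∈ Icc 1 X | sigma1 (6 * m + 17) < sigma1 (2 * m + 5) ∧
    sigma1 (6 * m + 7) < sigma1 (5 * m + 4)}

def admissibleDivisors (X : ℕ) : Finset ℕ :=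
  {e ∈ Icc 53 (6 * X + 17) | Nat.Coprime e (6 * modulus)}

lemma le_card_progression (X : ℕ) : X / modulus ≤ #(progression X) := by
  have hpos : 0 < residue := by decide
  have h : progression X = {m ∈ range (X + 1) | m ≡ residue [MOD modulus]} := by
    ext m
    simp only [progression, mem_filter, mem_Icc, mem_range]
    exact ⟨fun ⟨⟨_, hmX⟩, hm⟩ => ⟨by omega, hm⟩,
      fun ⟨hmX, hm⟩ => ⟨⟨hpos.trans_le (residue_le hm), by omega⟩, hm⟩⟩
  rw [h, ← Nat.count_eq_card_filter_range, Nat.count_modEq_card _ (by decide)]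
  exact (Nat.div_le_div_right (Nat.le_succ X)).trans (Nat.le_add_right _ _)

lemma mem_admissibleDivisors {X m c e : ℕ} (hm : m ∈ progression X) (hc : c = 7 ∨ c = 17)
    (he : e ∈ (6 * m + c).divisors) (he1 : e ≠ 1) : e ∈ admissibleDivisors X := by
  obtain ⟨hmX, hmr⟩ := mem_filter.1 hm
  obtain ⟨hed, -⟩ := Nat.mem_divisors.1 he
  have he2 : 2 ≤ e := by have := Nat.pos_of_mem_divisors he; omega
  refine mem_filter.2 ⟨mem_Icc.2 ⟨(le_minFac_six_mul_add hmr hc).trans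
    (Nat.minFac_le_of_dvd he2 hed), ?_⟩, coprime_six_mul_modulus_of_dvd hmr hc hed⟩
  have := Nat.le_of_dvd (by omega) hed
  have := (mem_Icc.1 hmX).2
  omega

lemma card_progression_dvd_div_le {X e : ℕ} (c : ℕ) (he : e ∈ admissibleDivisors X) :
    (#{m ∈ progression X | e ∣ 6 * m + c} : ℚ) / e ≤
      X / modulus * ((e : ℚ) ^ 2)⁻¹ + 2 * (e : ℚ)⁻¹ := by
  obtain ⟨he, hcop⟩ := mem_filter.1 he
  have he53 := (mem_Icc.1 he).1
  have he0 : (0 : ℚ) < e := by positivity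
  rw [progression, filter_filter]
  calc _ ≤ ((X : ℚ) / (modulus * e) + 2) / e := by
        gcongr
        exact card_filter_modEq_dvd_le X (by decide) (by omega) 6 c residue hcop
    _ = _ := by field_simp

lemma sum_admissibleDivisors_le (X c : ℕ) :
    ∑ e ∈ admissibleDivisors X, (#{m ∈ progression X | e ∣ 6 * m + c} : ℚ) / e ≤
      X / modulus * (2 / 53) + 2 * harmonic (6 * X + 17) := by
  set N := 6 * X + 17
  have hIcc : Icc 53 N = Ioo 52 (N + 1) := by ext; simp only [mem_Icc, mem_Ioo]; omega
  have hinv : ∑ e ∈ Icc 53 N, (e : ℚ)⁻¹ ≤ harmonic N := by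
    rw [harmonic_eq_sum_Icc]
    exact sum_le_sum_of_subset_of_nonneg (Icc_subset_Icc_left (by norm_num))
      fun _ _ _ => by positivity
  calc _ ≤ ∑ e ∈ admissibleDivisors X, ((X : ℚ) / modulus * ((e : ℚ) ^ 2)⁻¹ + 2 * (e : ℚ)⁻¹) :=
        sum_le_sum fun e he => card_progression_dvd_div_le c he
    _ ≤ ∑ e ∈ Icc 53 N, ((X : ℚ) / modulus * ((e : ℚ) ^ 2)⁻¹ + 2 * (e : ℚ)⁻¹) :=
        sum_le_sum_of_subset_of_nonneg (filter_subset _ _) fun _ _ _ => by positivity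
    _ = X / modulus * ∑ e ∈ Ioo 52 (N + 1), ((e : ℚ) ^ 2)⁻¹ + 2 * ∑ e ∈ Icc 53 N, (e : ℚ)⁻¹ := by
        rw [sum_add_distrib, ← mul_sum, ← mul_sum, hIcc]
    _ ≤ X / modulus * (2 / 53) + 2 * harmonic N := by
        gcongr
        exact (sum_Ioo_inv_sq_le 52 (N + 1)).trans_eq (by norm_num)

lemma card_progression_abundant_le (X : ℕ) {c : ℕ} (hc : c = 7 ∨ c = 17) :
    (#{m ∈ progression X | 8 / 7 < (6 * m + c).abundancyIndex} : ℚ) ≤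
      14 / 53 * (X / modulus) + 14 * harmonic (6 * X + 17) := by
  have hmarkov := card_filter_abundancyIndex_gt_le (progression X) (admissibleDivisors X)
    (fun m => 6 * m + c) (1 / 7) (fun _ _ => by omega)
    fun _ hm _ he he1 => mem_admissibleDivisors hm hc he he1
  rw [show (1 : ℚ) + 1 / 7 = 8 / 7 by norm_num] at hmarkov
  linarith [sum_admissibleDivisors_le X c]

lemma card_progression_le (X : ℕ) :
    #(progression X) ≤ #(solutions X) +
      #{m ∈ progression X | 8 / 7 < (6 * m + 17).abundancyIndex} +
      #{m ∈ progression X | 8 / 7 < (6 * m + 7).abundancyIndex} := by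
  refine (card_le_card fun m hm => ?_).trans
    ((card_union_le _ _).trans (by rw [add_assoc]; gcongr; exact card_union_le _ _))
  obtain ⟨hmX, hmr⟩ := mem_filter.1 hm
  simp only [solutions, mem_union, mem_filter]
  by_cases h17 : 8 / 7 < (6 * m + 17).abundancyIndex
  · exact .inr (.inl ⟨hm, h17⟩)
  by_cases h7 : 8 / 7 < (6 * m + 7).abundancyIndex
  · exact .inr (.inr ⟨hm, h7⟩)
  have hm6 : (6 : ℚ) ≤ m := by exact_mod_cast (show 6 ≤ residue by decide).trans (residue_le hmr)
  refine .inl ⟨hmX, sigma1_lt_sigma1_of_abundancyIndex_le (not_lt.1 h17)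
    (abundantOdd_dvd_two_mul_add_five hmr) (by omega) ?_, sigma1_lt_sigma1_of_abundancyIndex_le
    (not_lt.1 h7) (four_dvd_five_mul_add_four hmr) (by omega) ?_⟩
  · push_cast
    nlinarith [le_abundancyIndex_abundantOdd]
  · rw [abundancyIndex_four]
    push_cast
    linarith

lemma card_solutions_ge (X : ℕ) :
    ((X / modulus : ℕ) : ℚ) - (28 / 53 * (X / modulus) + 28 * harmonic (6 * X + 17)) ≤
      #(solutions X) := by
  have hprog : ((X / modulus : ℕ) : ℚ) ≤ #(progression X) := by
    exact_mod_cast le_card_progression X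
  have hsplit := (Nat.cast_le (α := ℚ)).2 (card_progression_le X)
  push_cast at hsplit
  linarith [card_progression_abundant_le X (c := 17) (.inr rfl),
    card_progression_abundant_le X (c := 7) (.inl rfl)]

lemma card_solutions_floor_ge {x : ℝ} (hx : 1 ≤ x) :
    25 / 53 * (x / modulus) - (29 + 28 * log 23 + 28 * log x) ≤ #(solutions ⌊x⌋₊) := by
  have hcard := (Rat.cast_le (K := ℝ)).2 (card_solutions_ge ⌊x⌋₊)
  push_cast at hcard
  have hfloor : x / modulus - 1 ≤ ((⌊x⌋₊ / modulus : ℕ) : ℝ) := by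
    rw [← Nat.floor_div_natCast]
    exact (Nat.sub_one_lt_floor _).le
  have hX : (⌊x⌋₊ : ℝ) / modulus ≤ x / modulus := by gcongr; exact Nat.floor_le (by linarith)
  have hH : (harmonic (6 * ⌊x⌋₊ + 17) : ℝ) ≤ 1 + log 23 + log x := by
    refine (harmonic_le_one_add_log _).trans ?_
    rw [add_assoc, ← Real.log_mul (by norm_num) (by linarith)]
    gcongr
    push_cast
    linarith [Nat.floor_le (show 0 ≤ x by linarith)]
  linarith

end SigmaComparison

/-- The number of positive integers `m ≤ x` with `σ(2m+5) > σ(6m+17)` and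
`σ(5m+4) > σ(6m+7)` is `≫ x / (log x)²`. -/
theorem stmt_11 :
    ∃ c : ℝ, 0 < c ∧ ∃ x₀ : ℝ, 0 < x₀ ∧ ∀ x : ℝ, x₀ ≤ x →
      c * x / (Real.log x) ^ 2 ≤
        (((Finset.Icc 1 ⌊x⌋₊).filter fun m =>
          sigma1 (6 * m + 17) < sigma1 (2 * m + 5) ∧
            sigma1 (6 * m + 7) < sigma1 (5 * m + 4)).card : ℝ) := by
  set μ : ℝ := (SigmaComparison.modulus : ℝ)
  have hμ : 0 < μ := Nat.cast_pos.2 (by decide)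
  obtain ⟨x₀, hx₀⟩ := Filter.eventually_atTop.1
    (eventually_add_mul_log_le (29 + 28 * log 23) 28 (a := 47 / 212 / μ) (by positivity))
  refine ⟨1 / 4 / μ, by positivity, max x₀ 3, by positivity, fun x hx => ?_⟩
  have hx3 : 3 ≤ x := le_of_max_le_right hx
  have hlog : 1 ≤ log x := by
    rw [Real.le_log_iff_exp_le (by linarith)]
    linarith [Real.exp_one_lt_d9]
  have hcard := SigmaComparison.card_solutions_floor_ge (by linarith : 1 ≤ x)
  have hev := hx₀ x (le_of_max_le_left hx)
  rw [show 47 / 212 / μ * x = 47 / 212 * (x / μ) by ring] at hev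
  calc 1 / 4 / μ * x / log x ^ 2 ≤ 1 / 4 / μ * x := div_le_self (by positivity) (one_le_pow₀ hlog)
    _ = 1 / 4 * (x / μ) := by ring
    _ ≤ #(SigmaComparison.solutions ⌊x⌋₊) := by linarith
end
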